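/- arXiv:1402.3730 — 2 statements merged into one kernel-verified Lean document; each statement's English description precedes it below -/
import Mathlib

section
/- For α ∈ (0,1), the sequence B_N = (1/Γ(2-α))·[1 + Σ_{p=1}^N Γ(p+α-1)/(Γ(α-1) p!)] converges to 0 as N → ∞. -/
/-!
With `β = α - 1`, the bracket is the partial sum `∑_{p ≤ N} binom(p + β - 1, p)` of generalized
binomial coefficients, which by the hockey-stick identity (Pascal's rule, using `Γ(s + 1) = s Γ(s)`)
equals `binom(N + α - 1, N) = ∏_{j < N} (j + α) / (j + 1)`. Each factor is `1 - (1 - α) / (j + 1)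
≤ exp (-(1 - α) / (j + 1))`, so the product is at most `exp (-(1 - α) H_N) ≤ (N + 1)^(α - 1)`,
which tends to `0` because `α < 1`.
-/

open Real Filter Finset Topology
open scoped Nat

/-- `gammaBinom s n = s (s + 1) ⋯ (s + n - 1) / n!`, the binomial coefficient `binom(n + s - 1, n)`. -/
noncomputable def gammaBinom (s : ℝ) (n : ℕ) : ℝ := Gamma (n + s) / (Gamma s * n !)

lemma gammaBinom_zero {s : ℝ} (hs : Gamma s ≠ 0) : gammaBinom s 0 = 1 := by
  simp [gammaBinom, hs]

lemma gammaBinom_succ {s : ℝ} {n : ℕ} (hns : (n : ℝ) + s ≠ 0) :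
    gammaBinom s (n + 1) = gammaBinom s n * ((n + s) / (n + 1)) := by
  have hΓ : Gamma ((n : ℝ) + 1 + s) = (n + s) * Gamma (n + s) := by
    rw [add_right_comm, Gamma_add_one hns]
  simp only [gammaBinom, Nat.factorial_succ, Nat.cast_mul, Nat.cast_succ, hΓ]
  field_simp

lemma gammaBinom_succ_eq_gammaBinom_add_one {s : ℝ} (hs : s ≠ 0) (n : ℕ) :
    gammaBinom s (n + 1) = gammaBinom (s + 1) n * (s / (n + 1)) := by
  simp only [gammaBinom, Gamma_add_one hs, Nat.factorial_succ, Nat.cast_mul, Nat.cast_succ,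
    add_assoc, add_comm (1 : ℝ) s]
  field_simp

lemma gammaBinom_add_one_succ {s : ℝ} {n : ℕ} (hs : s ≠ 0) (hns : (n : ℝ) + (s + 1) ≠ 0) :
    gammaBinom (s + 1) (n + 1) = gammaBinom (s + 1) n + gammaBinom s (n + 1) := by
  rw [gammaBinom_succ hns, gammaBinom_succ_eq_gammaBinom_add_one hs]
  field_simp
  ring

lemma sum_range_gammaBinom {s : ℝ} (hs : ∀ m : ℕ, s ≠ -m) (n : ℕ) :
    ∑ p ∈ range (n + 1), gammaBinom s p = gammaBinom (s + 1) n := by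
  have hs₀ : s ≠ 0 := by simpa using hs 0
  induction n with
  | zero =>
    have hs₁ : Gamma (s + 1) ≠ 0 := by
      rw [Gamma_add_one hs₀]; exact mul_ne_zero hs₀ (Gamma_ne_zero hs)
    simp [gammaBinom_zero (Gamma_ne_zero hs), gammaBinom_zero hs₁]
  | succ n ih =>
    have hns : (n : ℝ) + (s + 1) ≠ 0 := fun h => hs (n + 1) (by push_cast; linarith)
    rw [sum_range_succ, ih, gammaBinom_add_one_succ hs₀ hns]

lemma gammaBinom_pos {s : ℝ} (hs : 0 < s) (n : ℕ) : 0 < gammaBinom s n :=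
  div_pos (Gamma_pos_of_pos (by positivity)) (mul_pos (Gamma_pos_of_pos hs) (by positivity))

lemma gammaBinom_le_exp_harmonic {s : ℝ} (hs : 0 < s) (n : ℕ) :
    gammaBinom s n ≤ exp ((s - 1) * harmonic n) := by
  induction n with
  | zero => simp [gammaBinom_zero (Gamma_pos_of_pos hs).ne']
  | succ n ih =>
    have hstep : ((n : ℝ) + s) / (n + 1) ≤ exp ((s - 1) * (n + 1 : ℝ)⁻¹) := by
      calc ((n : ℝ) + s) / (n + 1) = (s - 1) * (n + 1 : ℝ)⁻¹ + 1 := by field_simp; ring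
        _ ≤ _ := add_one_le_exp _
    calc gammaBinom s (n + 1) = gammaBinom s n * ((n + s) / (n + 1)) :=
          gammaBinom_succ (by positivity)
      _ ≤ exp ((s - 1) * harmonic n) * exp ((s - 1) * (n + 1 : ℝ)⁻¹) :=
          mul_le_mul ih hstep (by positivity) (exp_nonneg _)
      _ = exp ((s - 1) * harmonic (n + 1)) := by
          rw [← exp_add, harmonic_succ]; push_cast; ring_nf

lemma gammaBinom_le_rpow {s : ℝ} (hs₀ : 0 < s) (hs₁ : s ≤ 1) (n : ℕ) :
    gammaBinom s n ≤ ((n : ℝ) + 1) ^ (s - 1) := by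
  calc gammaBinom s n ≤ exp ((s - 1) * harmonic n) := gammaBinom_le_exp_harmonic hs₀ n
    _ ≤ exp ((s - 1) * log ((n : ℝ) + 1)) := by
        gcongr exp ?_
        exact mul_le_mul_of_nonpos_left (by exact_mod_cast log_add_one_le_harmonic n) (by linarith)
    _ = ((n : ℝ) + 1) ^ (s - 1) := by rw [rpow_def_of_pos (by positivity), mul_comm]

lemma tendsto_gammaBinom_atTop_zero {s : ℝ} (hs₀ : 0 < s) (hs₁ : s < 1) :
    Tendsto (gammaBinom s) atTop (𝓝 0) := by
  have hpow : Tendsto (fun n : ℕ => ((n : ℝ) + 1) ^ (s - 1)) atTop (𝓝 0) := by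
    have := (tendsto_rpow_neg_atTop (sub_pos.2 hs₁)).comp
      (tendsto_natCast_atTop_atTop.atTop_add (tendsto_const_nhds (x := (1 : ℝ))))
    simpa [Function.comp_def] using this
  exact squeeze_zero (fun n => (gammaBinom_pos hs₀ n).le) (gammaBinom_le_rpow hs₀ hs₁.le) hpow

theorem coeff_B_tendsto_zero (α : ℝ) (hα : α ∈ Set.Ioo (0:ℝ) 1) :
    Filter.Tendsto
      (fun N : ℕ => (1 / Real.Gamma (2 - α)) *
        (1 + ∑ p ∈ Finset.Icc 1 N,
          Real.Gamma ((p : ℝ) + α - 1) / (Real.Gamma (α - 1) * (Nat.factorial p))))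
      Filter.atTop (nhds 0) := by
  obtain ⟨hα₀, hα₁⟩ := hα
  have hβ : ∀ m : ℕ, α - 1 ≠ -m := fun m h => by
    rcases Nat.eq_zero_or_pos m with rfl | hm
    · simp only [Nat.cast_zero, neg_zero] at h
      linarith
    · have : (1 : ℝ) ≤ m := by exact_mod_cast hm
      linarith
  have hsum (N : ℕ) : 1 + ∑ p ∈ Icc 1 N, Gamma ((p : ℝ) + α - 1) / (Gamma (α - 1) * p !) =
      gammaBinom (α - 1 + 1) N := by
    rw [← sum_range_gammaBinom hβ, sum_range_succ', gammaBinom_zero (Gamma_ne_zero hβ), add_comm,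
      range_eq_Ico, sum_Ico_add' (gammaBinom (α - 1)) 0 N 1, zero_add, Ico_add_one_right_eq_Icc]
    simp [gammaBinom, add_sub_assoc]
  simpa [hsum] using (tendsto_gammaBinom_atTop_zero hα₀ hα₁).const_mul (1 / Gamma (2 - α))
end

section
/- Let x be absolutely continuous on [a,b] with 0 < a and α ∈ (0,1). Then the Hadamard fractional derivative ${}_a\mathcal{D}_t^α x(t)$ exists for almost every t ∈ (a,b], i.e., the defining integral is differentiable in t almost everywhere and the expression is finite for a.e. t. -/
open MeasureTheory Real Set intervalIntegral

lemma kernel_measurable (s α : ℝ) : Measurable (fun τ : ℝ => Real.log (s / τ) ^ (-α) / τ) :=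
  ((Real.measurable_log.comp (measurable_const.div measurable_id)).pow_const _).div measurable_id

lemma kernel_integrable {a s α : ℝ} (ha : 0 < a) (hs : a < s) (hα : 0 < α) (hα1 : α < 1) :
    IntegrableOn (fun τ => Real.log (s / τ) ^ (-α) / τ) (Ioc a s) := by
  have hs0 : 0 < s := ha.trans hs
  have hG : IntegrableOn (fun τ => s ^ α / a * (s - τ) ^ (-α)) (Ioc a s) := by
    have h1 : IntervalIntegrable (fun y : ℝ => y ^ (-α)) volume (s - a) (s - s) :=
      intervalIntegrable_rpow' (by linarith)
    have h2 := (h1.comp_sub_left s).const_mul (s ^ α / a)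
    simpa [intervalIntegrable_iff, Set.uIoc_of_le hs.le, sub_sub_cancel] using h2
  refine hG.integrable.mono' (kernel_measurable s α).aestronglyMeasurable ?_
  rw [ae_restrict_iff' measurableSet_Ioc]
  refine Filter.Eventually.of_forall fun τ hτ => ?_
  obtain ⟨hτa, hτs⟩ := hτ
  have hτ0 : 0 < τ := ha.trans hτa
  have hlog0 : 0 ≤ Real.log (s / τ) :=
    Real.log_nonneg ((one_le_div hτ0).mpr hτs)
  have hf0 : 0 ≤ Real.log (s / τ) ^ (-α) / τ :=
    div_nonneg (Real.rpow_nonneg hlog0 _) hτ0.le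
  rw [Real.norm_eq_abs, abs_of_nonneg hf0]
  rcases eq_or_lt_of_le hτs with h | h
  · subst h
    simp [Real.zero_rpow (neg_ne_zero.mpr hα.ne'), div_self hτ0.ne']
  · have hkey : (s - τ) / s ≤ Real.log (s / τ) := by
      have h1 := Real.log_le_sub_one_of_pos (x := τ / s) (by positivity)
      have hlog : Real.log (s / τ) = -Real.log (τ / s) := by
        rw [← Real.log_inv]; congr 1; field_simp
      rw [hlog]
      have : (s - τ) / s = 1 - τ / s := by field_simp
      linarith
    have h2 : Real.log (s / τ) ^ (-α) ≤ ((s - τ) / s) ^ (-α) :=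
      Real.rpow_le_rpow_of_nonpos (div_pos (by linarith) hs0) hkey (by linarith)
    have h3 : ((s - τ) / s) ^ (-α) = s ^ α * (s - τ) ^ (-α) := by
      rw [Real.div_rpow (by linarith) hs0.le, Real.rpow_neg hs0.le]
      field_simp
    calc Real.log (s / τ) ^ (-α) / τ ≤ ((s - τ) / s) ^ (-α) / a := by
          gcongr
      _ = s ^ α / a * (s - τ) ^ (-α) := by rw [h3]; ring

lemma ftc_kernel {u s α : ℝ} (hu : 0 < u) (hus : u < s) (hα : 0 < α) (hα1 : α < 1) :
    ∫ τ in u..s, Real.log (s / τ) ^ (-α) / τ = Real.log (s / u) ^ (1 - α) / (1 - α) := by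
  have hs0 : 0 < s := hu.trans hus
  have hc : (0:ℝ) < 1 - α := by linarith
  have hrpow_cont : Continuous (fun y : ℝ => y ^ (1 - α)) :=
    continuous_iff_continuousAt.mpr fun y => Real.continuousAt_rpow_const y _ (Or.inr hc.le)
  have key := intervalIntegral.integral_eq_sub_of_hasDeriv_right_of_le
    (f := fun τ => -(Real.log (s / τ) ^ (1 - α)) / (1 - α))
    (f' := fun τ => Real.log (s / τ) ^ (-α) / τ) hus.le ?_ ?_ ?_
  · rw [key]
    have h1 : Real.log (s / s) = 0 := by rw [div_self hs0.ne']; exact Real.log_one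
    rw [h1, Real.zero_rpow hc.ne']
    ring
  · -- continuity
    have hlogcont : ContinuousOn (fun τ : ℝ => Real.log (s / τ)) (Icc u s) := by
      apply ContinuousOn.log
      · exact continuousOn_const.div continuousOn_id fun τ hτ => (hu.trans_le hτ.1).ne'
      · exact fun τ hτ => div_ne_zero hs0.ne' (hu.trans_le hτ.1).ne'
    exact ((hrpow_cont.comp_continuousOn hlogcont).neg).div_const _
  · -- derivative
    intro τ hτ
    have hτ0 : 0 < τ := hu.trans hτ.1
    have hlogpos : 0 < Real.log (s / τ) := Real.log_pos ((one_lt_div hτ0).mpr hτ.2)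
    have hlog : HasDerivAt (fun τ : ℝ => Real.log (s / τ)) (-τ⁻¹) τ := by
      have h1 : HasDerivAt (fun y : ℝ => Real.log s - Real.log y) (-τ⁻¹) τ :=
        (Real.hasDerivAt_log hτ0.ne').const_sub _
      apply h1.congr_of_eventuallyEq
      filter_upwards [eventually_gt_nhds hτ0] with y hy
      rw [Real.log_div hs0.ne' hy.ne']
    have hr : HasDerivAt (fun y : ℝ => y ^ (1 - α)) ((1 - α) * Real.log (s / τ) ^ (-α))
        (Real.log (s / τ)) := by
      have := Real.hasDerivAt_rpow_const (x := Real.log (s / τ)) (p := 1 - α)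
        (Or.inl hlogpos.ne')
      convert this using 2
      ring_nf
    have hcomp := ((hr.comp τ hlog).neg.div_const (1 - α))
    convert hcomp.hasDerivWithinAt using 1
    · funext y
      simp only [Function.comp_apply, Pi.neg_apply]
    · field_simp
  · rw [intervalIntegrable_iff, Set.uIoc_of_le hus.le]
    exact kernel_integrable hu hus hα hα1

lemma key_identity {a b α : ℝ} (ha : 0 < a) (hα : 0 < α) (hα1 : α < 1) {g x : ℝ → ℝ}
    (hg : IntegrableOn g (Ioc a b))
    (hxe : ∀ t ∈ Icc a b, x t = x a + ∫ u in a..t, g u)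
    {s : ℝ} (has : a < s) (hsb : s ≤ b) :
    ∫ τ in a..s, Real.log (s / τ) ^ (-α) * x τ / τ
      = x a * (Real.log (s / a) ^ (1 - α) / (1 - α))
        + (1 - α)⁻¹ * ∫ u in Ioc a s, g u * Real.log (s / u) ^ (1 - α) := by
  have hs0 : 0 < s := ha.trans has
  have hgs : IntegrableOn g (Ioc a s) := hg.mono_set (Set.Ioc_subset_Ioc_right hsb)
  set K : ℝ → ℝ := fun τ => Real.log (s / τ) ^ (-α) / τ with hK
  have hKnn : ∀ τ ∈ Ioc a s, 0 ≤ K τ := by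
    intro τ hτ
    have hτ0 : 0 < τ := ha.trans hτ.1
    exact div_nonneg (Real.rpow_nonneg (Real.log_nonneg ((one_le_div hτ0).mpr hτ.2)) _) hτ0.le
  have hKint : IntegrableOn K (Ioc a s) := kernel_integrable ha has hα hα1
  set G : ℝ → ℝ := fun τ => ∫ u in Ioc a τ, g u with hGdef
  have hGcont : ContinuousOn G (Icc a b) :=
    intervalIntegral.continuousOn_primitive ((integrableOn_Icc_iff_integrableOn_Ioc).mpr hg)
  set C : ℝ := ∫ u in Ioc a b, ‖g u‖ with hC
  have hGbdd : ∀ τ ∈ Ioc a s, ‖G τ‖ ≤ C := by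
    intro τ hτ
    calc ‖G τ‖ ≤ ∫ u in Ioc a τ, ‖g u‖ := norm_integral_le_integral_norm _
      _ ≤ C := by
        apply setIntegral_mono_set hg.norm
        · exact Filter.Eventually.of_forall fun u => norm_nonneg _
        · exact Filter.Eventually.of_forall <|
            Set.Ioc_subset_Ioc_right (hτ.2.trans hsb)
  -- measurability of K * G on Ioc a s
  have hGm : AEStronglyMeasurable G (volume.restrict (Ioc a s)) :=
    (hGcont.aestronglyMeasurable measurableSet_Icc).mono_measure
      (Measure.restrict_mono (Set.Ioc_subset_Icc_self.trans (Set.Icc_subset_Icc_right hsb))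
        le_rfl)
  have hKGint : IntegrableOn (fun τ => K τ * G τ) (Ioc a s) := by
    refine Integrable.mono' (hKint.mul_const C)
      ((kernel_measurable s α).aestronglyMeasurable.mul hGm) ?_
    rw [ae_restrict_iff' measurableSet_Ioc]
    refine Filter.Eventually.of_forall fun τ hτ => ?_
    rw [norm_mul]
    have h1 : ‖K τ‖ = K τ := Real.norm_of_nonneg (hKnn τ hτ)
    rw [h1]
    exact mul_le_mul_of_nonneg_left (hGbdd τ hτ) (hKnn τ hτ)
  -- Step 1 : rewrite LHS
  have step1 : ∫ τ in a..s, Real.log (s / τ) ^ (-α) * x τ / τ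
      = ∫ τ in Ioc a s, (K τ * x a + K τ * G τ) := by
    rw [intervalIntegral.integral_of_le has.le]
    apply setIntegral_congr_fun measurableSet_Ioc
    intro τ hτ
    have hτ0 : 0 < τ := ha.trans hτ.1
    have hx : x τ = x a + G τ := by
      rw [hxe τ ⟨hτ.1.le, hτ.2.trans hsb⟩, intervalIntegral.integral_of_le hτ.1.le]
    simp only []
    rw [hx]
    simp only [hK]
    field_simp
  rw [step1, integral_add (hKint.mul_const (x a)) hKGint]
  -- piece 1
  have piece1 : ∫ τ in Ioc a s, K τ * x a
      = x a * (Real.log (s / a) ^ (1 - α) / (1 - α)) := by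
    rw [MeasureTheory.integral_mul_const]
    rw [← intervalIntegral.integral_of_le has.le]
    rw [ftc_kernel ha has hα hα1]
    ring
  -- piece 2 : Fubini
  set μs := volume.restrict (Ioc a s) with hμs
  set Φ : ℝ → ℝ → ℝ :=
    fun τ u => {q : ℝ × ℝ | q.2 ≤ q.1}.indicator (fun q => K q.1 * g q.2) (τ, u) with hΦ
  have huncurry : Function.uncurry Φ
      = {q : ℝ × ℝ | q.2 ≤ q.1}.indicator (fun q => K q.1 * g q.2) := rfl
  have hΦmeas : AEStronglyMeasurable (Function.uncurry Φ) (μs.prod μs) := by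
    rw [huncurry]
    exact (((kernel_measurable s α).comp measurable_fst).aestronglyMeasurable.mul
      (hgs.aestronglyMeasurable.comp_snd)).indicator
      (measurableSet_le measurable_snd measurable_fst)
  have hΦint : Integrable (Function.uncurry Φ) (μs.prod μs) := by
    refine Integrable.mono' (Integrable.mul_prod hKint hgs.norm) hΦmeas ?_
    rw [hμs, Measure.prod_restrict, ae_restrict_iff' (measurableSet_Ioc.prod measurableSet_Ioc)]
    refine Filter.Eventually.of_forall fun q hq => ?_
    calc ‖Function.uncurry Φ q‖ ≤ ‖K q.1 * g q.2‖ := by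
          rw [huncurry]; exact norm_indicator_le_norm_self _ _
      _ ≤ K q.1 * ‖g q.2‖ := by
          rw [norm_mul, Real.norm_of_nonneg (hKnn q.1 hq.1)]
  have hswap := integral_integral_swap hΦint
  have lhs_eq : ∫ τ, (∫ u, Φ τ u ∂μs) ∂μs = ∫ τ in Ioc a s, K τ * G τ := by
    apply setIntegral_congr_fun measurableSet_Ioc
    intro τ hτ
    simp only []
    have h1 : (fun u => Φ τ u) = (Iic τ).indicator (fun u => K τ * g u) := by
      funext u
      by_cases h : u ≤ τ <;> simp [hΦ, Set.indicator_apply, h]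
    rw [h1, setIntegral_indicator measurableSet_Iic, Set.Ioc_inter_Iic,
      min_eq_right hτ.2, MeasureTheory.integral_const_mul]
  have rhs_eq : ∫ u, (∫ τ, Φ τ u ∂μs) ∂μs
      = ∫ u in Ioc a s, g u * (Real.log (s / u) ^ (1 - α) / (1 - α)) := by
    apply setIntegral_congr_fun measurableSet_Ioc
    intro u hu
    simp only []
    have hu0 : 0 < u := ha.trans hu.1
    have h1 : (fun τ => Φ τ u) = (Ici u).indicator (fun τ => K τ * g u) := by
      funext τ
      by_cases h : u ≤ τ <;> simp [hΦ, Set.indicator_apply, h]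
    rw [h1, setIntegral_indicator measurableSet_Ici]
    have h2 : Ioc a s ∩ Ici u = Icc u s := by
      ext τ
      simp only [Set.mem_inter_iff, Set.mem_Ioc, Set.mem_Ici, Set.mem_Icc]
      constructor
      · rintro ⟨⟨_, h2⟩, h3⟩; exact ⟨h3, h2⟩
      · rintro ⟨h1', h2⟩; exact ⟨⟨hu.1.trans_le h1', h2⟩, h1'⟩
    rw [h2, integral_Icc_eq_integral_Ioc]
    rcases eq_or_lt_of_le hu.2 with h | h
    · subst h
      simp [div_self hu0.ne', Real.log_one,
        Real.zero_rpow (show (1:ℝ) - α ≠ 0 by intro hh; linarith [hh])]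
    · rw [← intervalIntegral.integral_of_le h.le]
      have := ftc_kernel hu0 h hα hα1
      rw [intervalIntegral.integral_mul_const, this]
      ring
  rw [piece1, ← lhs_eq, hswap, rhs_eq, ← MeasureTheory.integral_const_mul]
  congr 1
  rw [hμs]
  apply setIntegral_congr_fun measurableSet_Ioc
  intro u hu
  simp only []
  have hne : (1:ℝ) - α ≠ 0 := by intro hh; linarith
  field_simp

lemma integ_aux {a c : ℝ} (ha : 0 < a) (hc : 0 ≤ c) {g0 : ℝ → ℝ} {σ s : ℝ} (hσs : σ ≤ s)
    (hg0 : IntegrableOn g0 (Ioc a σ)) :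
    IntegrableOn (fun u => g0 u * Real.log (s / u) ^ c) (Ioc a σ) := by
  have hker : Measurable (fun u : ℝ => Real.log (s / u) ^ c) :=
    (Real.measurable_log.comp (measurable_const.div measurable_id)).pow_const c
  refine Integrable.mono' (hg0.norm.mul_const (Real.log (s / a) ^ c))
    (hg0.aestronglyMeasurable.mul hker.aestronglyMeasurable) ?_
  rw [ae_restrict_iff' measurableSet_Ioc]
  refine Filter.Eventually.of_forall fun u hu => ?_
  have hu0 : 0 < u := ha.trans hu.1
  have hus : u ≤ s := hu.2.trans hσs
  have h1 : 0 ≤ Real.log (s / u) := Real.log_nonneg ((one_le_div hu0).mpr hus)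
  have h2 : Real.log (s / u) ≤ Real.log (s / a) := by
    apply Real.log_le_log (div_pos (hu0.trans_le hus) hu0)
    gcongr
    · exact (hu0.trans_le hus).le
    · exact hu.1.le
  rw [norm_mul]
  apply mul_le_mul_of_nonneg_left _ (norm_nonneg _)
  rw [Real.norm_of_nonneg (Real.rpow_nonneg h1 _)]
  exact Real.rpow_le_rpow h1 h2 hc

lemma hadamard_mono {a b c : ℝ} (ha : 0 < a) (hc : 0 ≤ c) {g0 : ℝ → ℝ}
    (hg0 : IntegrableOn g0 (Ioc a b)) (hg0n : ∀ u, 0 ≤ g0 u) :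
    Monotone (fun s => ∫ u in Ioc a (min (max s a) b), g0 u * Real.log (max s a / u) ^ c) := by
  intro s1 s2 h12
  simp only []
  set t1 := max s1 a with ht1d
  set t2 := max s2 a with ht2d
  have ht12 : t1 ≤ t2 := max_le_max h12 le_rfl
  have hat1 : a ≤ t1 := le_max_right _ _
  set m1 := min t1 b with hm1d
  set m2 := min t2 b with hm2d
  have hm12 : m1 ≤ m2 := min_le_min ht12 le_rfl
  have hm1b : m1 ≤ b := min_le_right _ _
  have hm2b : m2 ≤ b := min_le_right _ _
  have hm1t1 : m1 ≤ t1 := min_le_left _ _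
  have hm2t2 : m2 ≤ t2 := min_le_left _ _
  have int1 : IntegrableOn (fun u => g0 u * Real.log (t1 / u) ^ c) (Ioc a m1) :=
    integ_aux ha hc hm1t1 (hg0.mono_set (Set.Ioc_subset_Ioc_right hm1b))
  have int2a : IntegrableOn (fun u => g0 u * Real.log (t2 / u) ^ c) (Ioc a m1) :=
    integ_aux ha hc (hm1t1.trans ht12) (hg0.mono_set (Set.Ioc_subset_Ioc_right hm1b))
  have int2b : IntegrableOn (fun u => g0 u * Real.log (t2 / u) ^ c) (Ioc a m2) :=
    integ_aux ha hc hm2t2 (hg0.mono_set (Set.Ioc_subset_Ioc_right hm2b))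
  calc ∫ u in Ioc a m1, g0 u * Real.log (t1 / u) ^ c
      ≤ ∫ u in Ioc a m1, g0 u * Real.log (t2 / u) ^ c := by
        apply setIntegral_mono_on int1 int2a measurableSet_Ioc
        intro u hu
        have hu0 : 0 < u := ha.trans hu.1
        have h1 : 0 ≤ Real.log (t1 / u) :=
          Real.log_nonneg ((one_le_div hu0).mpr (hu.2.trans hm1t1))
        refine mul_le_mul_of_nonneg_left ?_ (hg0n u)
        refine Real.rpow_le_rpow h1 ?_ hc
        apply Real.log_le_log (div_pos ((hu0.trans_le hu.2).trans_le hm1t1) hu0)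
        gcongr
    _ ≤ ∫ u in Ioc a m2, g0 u * Real.log (t2 / u) ^ c := by
        apply setIntegral_mono_set int2b
        · rw [Filter.EventuallyLE, ae_restrict_iff' measurableSet_Ioc]
          refine Filter.Eventually.of_forall fun u hu => ?_
          have hu0 : 0 < u := ha.trans hu.1
          have h1 : 0 ≤ Real.log (t2 / u) :=
            Real.log_nonneg ((one_le_div hu0).mpr (hu.2.trans hm2t2))
          exact mul_nonneg (hg0n u) (Real.rpow_nonneg h1 _)
        · exact Filter.Eventually.of_forall (Set.Ioc_subset_Ioc_right hm12)

theorem hadamard_deriv_exists_of_absolutely_continuous (a b α : ℝ)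
    (hα : α ∈ Set.Ioo (0:ℝ) 1) (ha : 0 < a) (hab : a < b) (x : ℝ → ℝ)
    (hx : ∃ g : ℝ → ℝ, IntervalIntegrable g MeasureTheory.volume a b ∧
      ∀ t ∈ Set.Icc a b, x t = x a + ∫ u in a..t, g u) :
    ∀ᵐ t ∂(MeasureTheory.volume), t ∈ Set.Ioc a b →
      DifferentiableAt ℝ
        (fun s => ∫ τ in a..s, (Real.log (s / τ)) ^ (-α) * x τ / τ) t := by
  obtain ⟨g, hgi, hxe⟩ := hx
  obtain ⟨hα0, hα1⟩ := hα
  have hg : IntegrableOn g (Ioc a b) := by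
    rwa [intervalIntegrable_iff, Set.uIoc_of_le hab.le] at hgi
  set gp : ℝ → ℝ := fun u => g u ⊔ 0 with hgp_def
  set gm : ℝ → ℝ := fun u => -g u ⊔ 0 with hgm_def
  have hgp : IntegrableOn gp (Ioc a b) := hg.pos_part
  have hgm : IntegrableOn gm (Ioc a b) := hg.neg.pos_part
  have hgpn : ∀ u, 0 ≤ gp u := fun u => le_sup_right
  have hgmn : ∀ u, 0 ≤ gm u := fun u => le_sup_right
  have hc : (0:ℝ) ≤ 1 - α := by linarith
  set P : ℝ → ℝ :=
    fun s => ∫ u in Ioc a (min (max s a) b), gp u * Real.log (max s a / u) ^ (1 - α) with hPd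
  set M : ℝ → ℝ :=
    fun s => ∫ u in Ioc a (min (max s a) b), gm u * Real.log (max s a / u) ^ (1 - α) with hMd
  have hPmono : Monotone P := hadamard_mono ha hc hgp hgpn
  have hMmono : Monotone M := hadamard_mono ha hc hgm hgmn
  filter_upwards [hPmono.ae_differentiableAt, hMmono.ae_differentiableAt,
    measure_eq_zero_iff_ae_notMem.mp (Real.volume_singleton (a := b))] with t hdP hdM hnb ht
  have hta : a < t := ht.1
  have htb : t < b := lt_of_le_of_ne ht.2 (by simpa using hnb)
  have ht0 : 0 < t := ha.trans hta
  -- differentiability of the RHS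
  have h1 : DifferentiableAt ℝ (fun s : ℝ => x a * (Real.log (s / a) ^ (1 - α) / (1 - α))) t := by
    have hdiv : DifferentiableAt ℝ (fun s : ℝ => s / a) t := differentiableAt_id.div_const a
    have hlog : DifferentiableAt ℝ (fun s : ℝ => Real.log (s / a)) t :=
      hdiv.log (div_ne_zero ht0.ne' ha.ne')
    have hne : Real.log (t / a) ≠ 0 := ne_of_gt (Real.log_pos ((one_lt_div ha).mpr hta))
    exact ((hlog.rpow_const (Or.inl hne)).div_const _).const_mul _
  have h2 : DifferentiableAt ℝ
      (fun s : ℝ => x a * (Real.log (s / a) ^ (1 - α) / (1 - α)) + (1 - α)⁻¹ * (P s - M s)) t :=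
    h1.add ((hdP.sub hdM).const_mul _)
  refine (Filter.EventuallyEq.differentiableAt_iff ?_).mpr h2
  filter_upwards [isOpen_Ioo.mem_nhds (⟨hta, htb⟩ : t ∈ Ioo a b)] with s hs
  have hsa : a < s := hs.1
  have hsb : s < b := hs.2
  have hmax : max s a = s := max_eq_left hsa.le
  have hmin : min (max s a) b = s := by rw [hmax, min_eq_left hsb.le]
  rw [key_identity ha hα0 hα1 hg hxe hsa hsb.le]
  congr 1
  have intP : IntegrableOn (fun u => gp u * Real.log (s / u) ^ (1 - α)) (Ioc a s) :=
    integ_aux ha hc le_rfl (hgp.mono_set (Set.Ioc_subset_Ioc_right hsb.le))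
  have intM : IntegrableOn (fun u => gm u * Real.log (s / u) ^ (1 - α)) (Ioc a s) :=
    integ_aux ha hc le_rfl (hgm.mono_set (Set.Ioc_subset_Ioc_right hsb.le))
  have hPM : P s - M s = ∫ u in Ioc a s, g u * Real.log (s / u) ^ (1 - α) := by
    rw [hPd, hMd]
    simp only [hmax, min_eq_left hsb.le]
    rw [← integral_sub intP intM]
    apply setIntegral_congr_fun measurableSet_Ioc
    intro u hu
    simp only [hgp_def, hgm_def]
    rw [← sub_mul, max_zero_sub_max_neg_zero_eq_self]
  rw [hPM]
end
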